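/- arXiv:2010.07430 — 9 statements merged into one kernel-verified Lean document; each statement's English description precedes it below -/
import Mathlib

section
/- Fix a load g > 0 and δ ∈ [0,1]. In the SA-DPC model with M slots and N = ⌊gM⌋ users, the expected number of decoded packets divided by M converges, as M → ∞, to gδ·exp(−gδ) + (1 + gδ)·g(1−δ)·exp(−g). -/
open scoped Classical
open Filter

/-- Number of high-power packets in slot `s` under configuration `ω`
(each user's configuration is a pair (slot, high-power?)). -/
def highCount {M N : ℕ} (ω : Fin N → Fin M × Bool) (s : Fin M) : ℕ :=
  (Finset.univ.filter fun v : Fin N => (ω v).1 = s ∧ (ω v).2 = true).card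

/-- Number of low-power packets in slot `s` under configuration `ω`. -/
def lowCount {M N : ℕ} (ω : Fin N → Fin M × Bool) (s : Fin M) : ℕ :=
  (Finset.univ.filter fun v : Fin N => (ω v).1 = s ∧ (ω v).2 = false).card

/-- User `u` is decoded: a high-power packet is decoded iff it is the unique high-power
packet in its slot; a low-power packet is decoded iff it is the unique low-power packet
in its slot and the slot contains at most one high-power packet. -/
def sadpcDecoded {M N : ℕ} (ω : Fin N → Fin M × Bool) (u : Fin N) : Prop :=
  ((ω u).2 = true ∧ highCount ω (ω u).1 = 1) ∨
    ((ω u).2 = false ∧ lowCount ω (ω u).1 = 1 ∧ highCount ω (ω u).1 ≤ 1)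

/-- Probability of configuration `ω`: each user independently picks a uniform slot and is
high-power with probability `δ`, low-power with probability `1 - δ`. -/
noncomputable def sadpcWeight (M N : ℕ) (δ : ℝ) (ω : Fin N → Fin M × Bool) : ℝ :=
  ∏ _u : Fin N, (1 / (M : ℝ)) * (if (ω _u).2 then δ else 1 - δ)

/-- Expected number of decoded packets in the SA-DPC model with `M` slots, `N` users and
high-power probability `δ`. -/
noncomputable def sadpcExpected (M N : ℕ) (δ : ℝ) : ℝ :=
  ∑ ω : Fin N → Fin M × Bool,
    sadpcWeight M N δ ω * ((Finset.univ.filter fun u : Fin N => sadpcDecoded ω u).card : ℝ)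

/-!
By linearity of expectation, `sadpcExpected M N δ` is `N` times the probability that a fixed
user `u` is decoded. Conditioned on the choice `a` of `u`, the other `N - 1` users choose
independently, and `u` is decoded iff none of them chooses `a` and, when `u` is low-power, at most
one of them is high-power in the slot of `u`. Both events are unions of product sets, so their
probabilities are explicit:
`δ (1 - δ/M)^(N-1) + (1 - δ) ((1 - 1/M)^(N-1) + (N - 1) (δ/M) (1 - 1/M)^(N-2))`.
With `N = ⌊g M⌋₊` we have `N / M → g` and `(1 - c/M)^N → exp (-g c)`.
-/

open Finset Topology

section IndependentChoices

variable {κ α R : Type*} [Fintype κ] [DecidableEq κ] [Fintype α] [CommSemiring R]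

theorem Fintype.prod_ite_eq_mul_pow (w : κ) (x y : R) :
    ∏ j, (if j = w then x else y) = x * y ^ (Fintype.card κ - 1) := by
  rw [Fintype.prod_eq_mul_prod_subtype_ne _ w]
  simp [Finset.prod_ite_of_false, Fintype.card_subtype_compl]

theorem sum_prod_mul_eq_sum_mul_sum_subtype_ne (p : α → R) (u : κ)
    (G : α → ({j // j ≠ u} → α) → R) :
    ∑ ω : κ → α, (∏ j, p (ω j)) * G (ω u) (fun j => ω j) =
      ∑ a, p a * ∑ ω' : {j // j ≠ u} → α, (∏ j, p (ω' j)) * G a ω' := by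
  rw [Fintype.sum_equiv (Equiv.funSplitAt u α) _
    (fun x => p x.1 * ((∏ j, p (x.2 j)) * G x.1 x.2))
    (fun ω => by simp [Fintype.prod_eq_mul_prod_subtype_ne _ u, mul_assoc])]
  simp_rw [Fintype.sum_prod_type, mul_sum]

theorem card_filter_eq_boole_add_card_filter_subtype_ne (P : κ → Prop) [DecidablePred P]
    (u : κ) :
    #{v | P v} = (if P u then 1 else 0) + #{v : {v // v ≠ u} | P v} := by
  simp only [card_filter]
  exact Fintype.sum_eq_add_sum_subtype_ne _ u

variable [DecidableEq α]

theorem sum_prod_mul_boole_mem_piFinset (p : α → R) (t : κ → Finset α) :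
    ∑ ω : κ → α, (∏ j, p (ω j)) * (if ω ∈ Fintype.piFinset t then 1 else 0) =
      ∏ j, ∑ a ∈ t j, p a := by
  rw [prod_univ_sum]
  simp only [mul_boole, ← sum_filter, filter_mem_eq_inter, univ_inter]

theorem sum_prod_mul_boole_forall_mem (p : α → R) (S : Finset α) :
    ∑ ω : κ → α, (∏ j, p (ω j)) * (if ∀ j, ω j ∈ S then 1 else 0) =
      (∑ a ∈ S, p a) ^ Fintype.card κ := by
  simpa [Fintype.mem_piFinset] using sum_prod_mul_boole_mem_piFinset p fun _ : κ => S

theorem sum_prod_mul_boole_forall_ne (p : α → R) (a : α) :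
    ∑ ω : κ → α, (∏ j, p (ω j)) * (if ∀ j, ω j ≠ a then 1 else 0) =
      (∑ x ∈ {a}ᶜ, p x) ^ Fintype.card κ := by
  simpa using sum_prod_mul_boole_forall_mem (κ := κ) p {a}ᶜ

theorem sum_prod_mul_boole_exists_mem_forall_ne_mem (p : α → R) {B C : Finset α}
    (hBC : Disjoint B C) :
    ∑ ω : κ → α, (∏ j, p (ω j)) * (if ∃ w, ω w ∈ B ∧ ∀ j ≠ w, ω j ∈ C then 1 else 0) =
      Fintype.card κ * (∑ a ∈ B, p a) * (∑ a ∈ C, p a) ^ (Fintype.card κ - 1) := by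
  let box (w : κ) : Finset (κ → α) := Fintype.piFinset fun j => if j = w then B else C
  have mem_box {ω : κ → α} {w : κ} : ω ∈ box w ↔ ω w ∈ B ∧ ∀ j ≠ w, ω j ∈ C := by
    simp only [box, Fintype.mem_piFinset]
    refine ⟨fun h => ⟨by simpa using h w, fun j hj => by simpa [hj] using h j⟩, ?_⟩
    rintro ⟨hw, hC⟩ j
    split_ifs with h
    exacts [h ▸ hw, hC j h]
  have boole_eq_sum (ω : κ → α) : (if ∃ w, ω w ∈ B ∧ ∀ j ≠ w, ω j ∈ C then (1 : R) else 0) =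
      ∑ w, if ω ∈ box w then 1 else 0 := by
    simp_rw [mem_box]
    refine (Fintype.sum_ite_eq_ite_exists _ (fun w w' hw hw' => ?_) _).symm
    by_contra hne
    exact disjoint_left.mp hBC hw.1 (hw'.2 w hne)
  calc _ = ∑ w, ∑ ω : κ → α, (∏ j, p (ω j)) * (if ω ∈ box w then 1 else 0) := by
        simp_rw [boole_eq_sum, mul_sum]
        exact sum_comm
    _ = _ := by
        simp_rw [box, sum_prod_mul_boole_mem_piFinset,
          apply_ite (fun s : Finset α => ∑ a ∈ s, p a), Fintype.prod_ite_eq_mul_pow, sum_const,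
          card_univ, nsmul_eq_mul, mul_assoc]

theorem sum_prod_mul_boole_forall_ne_and_card_le_one (p : α → R) {a b : α} (hab : a ≠ b) :
    ∑ ω : κ → α, (∏ j, p (ω j)) * (if (∀ j, ω j ≠ a) ∧ #{j | ω j = b} ≤ 1 then 1 else 0) =
      (∑ x ∈ {a, b}ᶜ, p x) ^ Fintype.card κ +
        Fintype.card κ * p b * (∑ x ∈ {a, b}ᶜ, p x) ^ (Fintype.card κ - 1) := by
  have boole_eq_add (ω : κ → α) :
      (if (∀ j, ω j ≠ a) ∧ #{j | ω j = b} ≤ 1 then (1 : R) else 0) =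
        (if ∀ j, ω j ∈ ({a, b}ᶜ : Finset α) then 1 else 0) +
          (if ∃ w, ω w ∈ ({b} : Finset α) ∧ ∀ j ≠ w, ω j ∈ ({a, b}ᶜ : Finset α) then 1 else 0) := by
    simp only [mem_compl, mem_insert, mem_singleton, not_or, card_le_one, mem_filter, mem_univ,
      true_and]
    by_cases hb : ∃ w, ω w = b
    · obtain ⟨w, hw⟩ := hb
      have not_none : ¬∀ j, ¬ω j = a ∧ ¬ω j = b := fun h => (h w).2 hw
      rw [if_neg not_none, zero_add]
      exact if_congr (by grind) rfl rfl
    · push Not at hb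
      simp [hb]
  simp_rw [boole_eq_add, mul_add, sum_add_distrib, sum_prod_mul_boole_forall_mem,
    sum_prod_mul_boole_exists_mem_forall_ne_mem p
      (by simp [hab.symm] : Disjoint {b} ({a, b}ᶜ : Finset α)),
    sum_singleton]

end IndependentChoices

section Model

variable {M N : ℕ}

noncomputable def sadpcChoiceProb (M : ℕ) (δ : ℝ) (b : Fin M × Bool) : ℝ :=
  1 / M * (if b.2 then δ else 1 - δ)

theorem sadpcWeight_eq_prod (δ : ℝ) (ω : Fin N → Fin M × Bool) :
    sadpcWeight M N δ ω = ∏ u, sadpcChoiceProb M δ (ω u) := rfl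

theorem sum_sadpcChoiceProb (hM : 0 < M) (δ : ℝ) : ∑ b, sadpcChoiceProb M δ b = 1 := by
  simp only [sadpcChoiceProb, one_div, mul_ite, Fintype.sum_prod_type, Fintype.sum_bool,
    if_true, Bool.false_eq_true, if_false, sum_add_distrib, sum_const, card_univ,
    Fintype.card_fin, nsmul_eq_mul]
  field_simp
  ring

theorem sum_compl_singleton_sadpcChoiceProb (hM : 0 < M) (δ : ℝ) (a : Fin M × Bool) :
    ∑ b ∈ {a}ᶜ, sadpcChoiceProb M δ b = 1 - sadpcChoiceProb M δ a := by
  rw [← sum_sadpcChoiceProb hM δ, ← sum_compl_add_sum {a}, sum_singleton, add_sub_cancel_right]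

theorem sum_compl_slot_sadpcChoiceProb (hM : 0 < M) (δ : ℝ) (s : Fin M) :
    ∑ b ∈ {(s, false), (s, true)}ᶜ, sadpcChoiceProb M δ b = 1 - 1 / M := by
  have h := sum_compl_add_sum ({(s, false), (s, true)} : Finset _) (sadpcChoiceProb M δ)
  rw [sum_pair (by simp), sum_sadpcChoiceProb hM] at h
  have slot_prob : sadpcChoiceProb M δ (s, false) + sadpcChoiceProb M δ (s, true) = 1 / M := by
    simp only [sadpcChoiceProb, one_div, Bool.false_eq_true, if_true, if_false]
    ring
  linarith

theorem highCount_eq_card (ω : Fin N → Fin M × Bool) (s : Fin M) :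
    highCount ω s = #{v | ω v = (s, true)} := by
  simp [highCount, Prod.ext_iff]

theorem lowCount_eq_card (ω : Fin N → Fin M × Bool) (s : Fin M) :
    lowCount ω s = #{v | ω v = (s, false)} := by
  simp [lowCount, Prod.ext_iff]

theorem sadpcDecoded_iff (ω : Fin N → Fin M × Bool) (u : Fin N) :
    sadpcDecoded ω u ↔ (∀ v : {v // v ≠ u}, ω v ≠ ω u) ∧
      ((ω u).2 = false → #{v : {v // v ≠ u} | ω v = ((ω u).1, true)} ≤ 1) := by
  rw [sadpcDecoded, highCount_eq_card, lowCount_eq_card,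
    card_filter_eq_boole_add_card_filter_subtype_ne _ u,
    card_filter_eq_boole_add_card_filter_subtype_ne _ u]
  rcases ω u with ⟨s, _ | _⟩ <;> simp [card_eq_zero, filter_eq_empty_iff]

theorem sum_sadpcWeight_mul_boole_decoded (hM : 0 < M) (δ : ℝ) (u : Fin N) :
    ∑ ω, sadpcWeight M N δ ω * (if sadpcDecoded ω u then 1 else 0) =
      δ * (1 - δ / M) ^ (N - 1) +
        (1 - δ) * ((1 - 1 / M) ^ (N - 1) + (N - 1 : ℕ) * (δ / M) * (1 - 1 / M) ^ (N - 2)) := by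
  simp_rw [sadpcWeight_eq_prod, sadpcDecoded_iff]
  refine (sum_prod_mul_eq_sum_mul_sum_subtype_ne (sadpcChoiceProb M δ) u (fun a ω' =>
    if (∀ v, ω' v ≠ a) ∧ (a.2 = false → #{v | ω' v = (a.1, true)} ≤ 1) then 1 else 0)).trans ?_
  simp only [Fintype.sum_prod_type, Fintype.sum_bool, Bool.true_eq_false, false_imp_iff,
    and_true, forall_const, sum_prod_mul_boole_forall_ne,
    sum_prod_mul_boole_forall_ne_and_card_le_one _ (by simp : ((_ : Fin M), false) ≠ (_, true)),
    sum_compl_singleton_sadpcChoiceProb hM, sum_compl_slot_sadpcChoiceProb hM]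
  have card_others : Fintype.card {j // j ≠ u} = N - 1 := by
    simp [Fintype.card_subtype_compl]
  simp only [sadpcChoiceProb, one_div, if_true, Bool.false_eq_true, if_false, card_others,
    Nat.sub_sub, Nat.reduceAdd, sum_add_distrib, sum_const, card_univ, Fintype.card_fin,
    nsmul_eq_mul]
  field_simp

theorem sadpcExpected_eq (hM : 0 < M) (δ : ℝ) :
    sadpcExpected M N δ = N * (δ * (1 - δ / M) ^ (N - 1) +
      (1 - δ) * ((1 - 1 / M) ^ (N - 1) + (N - 1 : ℕ) * (δ / M) * (1 - 1 / M) ^ (N - 2))) := by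
  simp_rw [sadpcExpected, card_filter, Nat.cast_sum, Nat.cast_ite, Nat.cast_one, Nat.cast_zero,
    mul_sum]
  rw [sum_comm]
  simp only [sum_sadpcWeight_mul_boole_decoded hM, sum_const, card_univ, Fintype.card_fin,
    nsmul_eq_mul]

end Model

theorem tendsto_natCast_sub_div_atTop {n : ℕ → ℕ} {g : ℝ}
    (hn : Tendsto (fun M : ℕ => (n M : ℝ) / M) atTop (𝓝 g)) (j : ℕ) :
    Tendsto (fun M : ℕ => ((n M - j : ℕ) : ℝ) / M) atTop (𝓝 g) := by
  have lower : Tendsto (fun M : ℕ => (n M : ℝ) / M - j / M) atTop (𝓝 g) := by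
    simpa using hn.sub (tendsto_const_div_atTop_nhds_zero_nat (j : ℝ))
  refine tendsto_of_tendsto_of_tendsto_of_le_of_le lower hn (fun M => ?_) (fun M => ?_)
  · rw [← sub_div]
    gcongr
    have : n M ≤ n M - j + j := by omega
    linarith [(by exact_mod_cast this : (n M : ℝ) ≤ ((n M - j : ℕ) : ℝ) + j)]
  · gcongr
    exact_mod_cast Nat.sub_le _ _

theorem tendsto_one_sub_div_pow_atTop {n : ℕ → ℕ} {g : ℝ}
    (hn : Tendsto (fun M : ℕ => (n M : ℝ) / M) atTop (𝓝 g)) (c : ℝ) :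
    Tendsto (fun M : ℕ => (1 - c / M) ^ n M) atTop (𝓝 (Real.exp (-(g * c)))) := by
  have mul_log : Tendsto (fun M : ℕ => (M : ℝ) * Real.log (1 + -c / M)) atTop (𝓝 (-c)) :=
    (Real.tendsto_mul_log_one_add_div_atTop (-c)).comp tendsto_natCast_atTop_atTop
  have := (Real.continuous_exp.tendsto _).comp (hn.mul mul_log)
  rw [mul_neg] at this
  refine this.congr' ?_
  filter_upwards [(tendsto_const_div_atTop_nhds_zero_nat c).eventually (gt_mem_nhds one_pos),
    eventually_gt_atTop 0] with M hc hM
  have hM' : (M : ℝ) ≠ 0 := by positivity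
  calc Real.exp (n M / M * (M * Real.log (1 + -c / M)))
      = Real.exp (n M * Real.log (1 - c / M)) := by
        rw [neg_div, ← sub_eq_add_neg]
        field_simp
    _ = (1 - c / M) ^ n M := by
        rw [Real.exp_nat_mul, Real.exp_log (by linarith)]

theorem sa_dpc_asymptotic_throughput_general (g δ : ℝ) (hg : 0 < g) :
    Tendsto (fun M : ℕ => sadpcExpected M ⌊g * (M : ℝ)⌋₊ δ / (M : ℝ)) atTop
      (nhds (g * δ * Real.exp (-(g * δ)) +
        (1 + g * δ) * (g * (1 - δ)) * Real.exp (-g))) := by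
  set N : ℕ → ℕ := fun M => ⌊g * (M : ℝ)⌋₊
  have hN : Tendsto (fun M : ℕ => (N M : ℝ) / M) atTop (𝓝 g) :=
    (tendsto_nat_floor_mul_div_atTop hg.le).comp tendsto_natCast_atTop_atTop
  have hN1 := tendsto_natCast_sub_div_atTop hN 1
  have hN2 := tendsto_natCast_sub_div_atTop hN 2
  have hlim := hN.mul (((tendsto_one_sub_div_pow_atTop hN1 δ).const_mul δ).add
    (((tendsto_one_sub_div_pow_atTop hN1 1).add ((hN1.mul_const δ).mul
      (tendsto_one_sub_div_pow_atTop hN2 1))).const_mul (1 - δ)))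
  convert hlim.congr' _ using 2
  · rw [mul_one]
    ring
  · filter_upwards [eventually_gt_atTop 0] with M hM
    rw [sadpcExpected_eq hM]
    simp only [N]
    field_simp

/-- The asymptotic throughput of SA-DPC at load `g` with power-choice probability `δ` is
`gδ e^{-gδ} + (1+gδ) g(1-δ) e^{-g}`. -/
theorem sa_dpc_asymptotic_throughput (g δ : ℝ) (hg : 0 < g) (hδ : δ ∈ Set.Icc (0 : ℝ) 1) :
    Tendsto (fun M : ℕ => sadpcExpected M ⌊g * (M : ℝ)⌋₊ δ / (M : ℝ)) atTop
      (nhds (g * δ * Real.exp (-(g * δ)) +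
        (1 + g * δ) * (g * (1 - δ)) * Real.exp (-g))) :=
  sa_dpc_asymptotic_throughput_general g δ hg
end

section
/- Fix a load g > 0, an integer n ≥ 1, and a probability vector (δ₁, …, δₙ) with δᵢ ≥ 0 and ∑ᵢ δᵢ = 1. In the SA-nPC model with M slots and N = ⌊gM⌋ users, the expected number of decoded packets divided by M converges, as M → ∞, to ∑_{i=1}^{n} ( ∏_{j=1}^{i−1} (1 + gδⱼ)·exp(−gδⱼ) ) · gδᵢ·exp(−gδᵢ). -/
open scoped Classical
open Filter

/-- Number of packets of power level `i` in slot `s` under configuration `ω`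
(each user's configuration is a pair (slot, power level); level `0` is the strongest). -/
def levelCount {M N n : ℕ} (ω : Fin N → Fin M × Fin n) (s : Fin M) (i : Fin n) : ℕ :=
  (Finset.univ.filter fun v : Fin N => (ω v).1 = s ∧ (ω v).2 = i).card

/-- User `u` is decoded: its packet (of level `i = (ω u).2`) is decoded iff it is the unique
level-`i` packet in its slot and, for every stronger level `j < i`, the slot contains at most
one level-`j` packet. -/
def sanpcDecoded {M N n : ℕ} (ω : Fin N → Fin M × Fin n) (u : Fin N) : Prop :=
  levelCount ω (ω u).1 (ω u).2 = 1 ∧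
    ∀ j : Fin n, j < (ω u).2 → levelCount ω (ω u).1 j ≤ 1

/-- Probability of configuration `ω`: each user independently picks a uniform slot and a
power level `i` with probability `δ i`. -/
noncomputable def sanpcWeight (M N n : ℕ) (δ : Fin n → ℝ) (ω : Fin N → Fin M × Fin n) : ℝ :=
  ∏ u : Fin N, (1 / (M : ℝ)) * δ (ω u).2

/-- Expected number of decoded packets in the SA-nPC model with `M` slots, `N` users and
power-choice distribution `δ`. -/
noncomputable def sanpcExpected (M N n : ℕ) (δ : Fin n → ℝ) : ℝ :=
  ∑ ω : Fin N → Fin M × Fin n,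
    sanpcWeight M N n δ ω *
      ((Finset.univ.filter fun u : Fin N => sanpcDecoded ω u).card : ℝ)

/-!
A decoded packet is the only one in its cell (slot, level), so the number of decoded packets
is the number of cells `(s, i)` holding exactly one packet while every stronger cell `(s, j)`,
`j < i`, holds at most one. Splitting this event according to the set `S` of stronger levels
holding exactly one packet pins down the counts on `{(s, j) | j ≤ i}`, and a multinomial count
gives its probability `N^{(|S|+1)} (δᵢ ∏_{j ∈ S} δⱼ) / M^{|S|+1} · (1 - (δ₀ + ⋯ + δᵢ)/M)^{N-|S|-1}`.
As `N/M → g` the falling factorial over `M^{|S|+1}` tends to `g^{|S|+1}` and the power to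
`exp (-g (δ₀ + ⋯ + δᵢ))`; the sum over `S ⊆ {j < i}` then factors as `∏_{j<i} (1 + g δⱼ)`.
-/

open Finset Topology

section FiberCard

variable {α β : Type*} [DecidableEq β]

def fiberCard [Fintype α] (f : α → β) (b : β) : ℕ := #{a | f a = b}

def HitsExactly [Fintype α] (A S : Finset β) (f : α → β) : Prop :=
  ∀ b ∈ A, fiberCard f b = if b ∈ S then 1 else 0

lemma card_filter_fiberCard_eq_one [Fintype α] [Fintype β] (f : α → β) (P : β → Prop)
    [DecidablePred P] :
    #{a | fiberCard f (f a) = 1 ∧ P (f a)} = #{b | fiberCard f b = 1 ∧ P b} := by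
  refine card_nbij f (fun a ha => by simpa using ha) ?_ ?_
  · intro a ha a' ha' h
    simp only [mem_coe, mem_filter, mem_univ, true_and] at ha
    obtain ⟨c, hc⟩ := card_eq_one.1 ha.1
    have mem : ∀ x, f x = f a → x = c := fun x hx => by
      simpa using (Finset.ext_iff.1 hc x).1 (by simpa using hx)
    exact (mem a rfl).trans (mem a' h.symm).symm
  · intro b hb
    simp only [mem_coe, mem_filter, mem_univ, true_and] at hb
    obtain ⟨a, ha⟩ := card_eq_one.1 hb.1
    have hab : f a = b := by simpa using (Finset.ext_iff.1 ha a).2 (mem_singleton_self a)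
    exact ⟨a, by simpa [hab] using hb, hab⟩

lemma fiberCard_cons {N : ℕ} (x : β) (f : Fin N → β) (b : β) :
    fiberCard (Fin.cons x f : Fin (N + 1) → β) b = (if x = b then 1 else 0) + fiberCard f b := by
  simp only [fiberCard, card_filter, Fin.sum_univ_succ, Fin.cons_zero, Fin.cons_succ]

lemma hitsExactly_iff_of_isEmpty [Fintype α] [IsEmpty α] {A S : Finset β} (hS : S ⊆ A)
    (f : α → β) : HitsExactly A S f ↔ S = ∅ := by
  simp only [HitsExactly, fiberCard, univ_eq_empty, filter_empty, card_empty]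
  constructor
  · intro h
    refine eq_empty_of_forall_notMem fun b hb => ?_
    simpa [hb] using h b (hS hb)
  · rintro rfl b _
    simp

lemma hitsExactly_cons_iff {A S : Finset β} {N : ℕ} (x : β) (f : Fin N → β) :
    HitsExactly A S (Fin.cons x f : Fin (N + 1) → β) ↔
      if x ∈ A then x ∈ S ∧ HitsExactly A (S.erase x) f else HitsExactly A S f := by
  simp only [HitsExactly, fiberCard_cons, mem_erase]
  split_ifs with hxA
  · by_cases hxS : x ∈ S
    · simp only [hxS, true_and]
      refine forall₂_congr fun b _ => ?_
      rcases eq_or_ne x b with rfl | hxb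
      · simp [hxS]
      · simp [hxb, hxb.symm]
    · simp only [hxS, false_and, iff_false, not_forall]
      exact ⟨x, hxA, by simp [hxS]⟩
  · refine forall₂_congr fun b hb => ?_
    rw [if_neg (ne_of_mem_of_not_mem hb hxA).symm, zero_add]

lemma hitsExactly_image_iff {ι : Type*} [Fintype α] [DecidableEq ι] {e : ι → β}
    (he : Function.Injective e) (T S : Finset ι) (f : α → β) :
    HitsExactly (T.image e) (S.image e) f ↔
      ∀ j ∈ T, fiberCard f (e j) = if j ∈ S then 1 else 0 := by
  simp only [HitsExactly, forall_mem_image, he.mem_finset_image]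

end FiberCard

lemma cast_succ_descFactorial_mul_pow {R : Type*} [CommSemiring R] (r : R) (N k : ℕ) :
    r * ((N.descFactorial k : R) * r ^ (N - k)) +
        k * ((N.descFactorial (k - 1) : R) * r ^ (N - (k - 1))) =
      ((N + 1).descFactorial k : R) * r ^ (N + 1 - k) := by
  rcases k with _ | m
  · simp [pow_succ, mul_comm]
  simp only [Nat.add_sub_cancel, Nat.succ_descFactorial_succ, Nat.add_sub_add_right]
  rcases lt_or_ge N m with hNm | hmN
  · simp [Nat.descFactorial_eq_zero_iff_lt.2 hNm]
  obtain ⟨e, rfl⟩ := Nat.exists_eq_add_of_le hmN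
  rw [Nat.descFactorial_succ]
  rcases e with _ | e
  · simp
  · simp only [Nat.add_sub_cancel_left, show m + (e + 1) - (m + 1) = e by omega]
    push_cast
    ring

section SumHitsExactly

variable {β R : Type*} [Fintype β] [DecidableEq β] [CommSemiring R]

lemma sum_prod_hitsExactly_succ (p : β → R) (A S : Finset β) (N : ℕ) :
    ∑ f : Fin (N + 1) → β with HitsExactly A S f, ∏ v, p (f v) =
      (∑ b ∈ Aᶜ, p b) * ∑ f : Fin N → β with HitsExactly A S f, ∏ v, p (f v) +
        ∑ x ∈ A ∩ S, p x * ∑ f : Fin N → β with HitsExactly A (S.erase x) f, ∏ v, p (f v) := by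
  have hcons : ∀ x (f : Fin N → β), Fin.consEquiv (fun _ => β) (x, f) = Fin.cons x f :=
    fun _ _ => rfl
  rw [sum_filter, ← (Fin.consEquiv fun _ => β).sum_comp, Fintype.sum_prod_type,
    ← sum_add_sum_compl A, add_comm, sum_mul, ← sum_ite_mem]
  simp only [hcons, hitsExactly_cons_iff, Fin.prod_univ_succ, Fin.cons_zero, Fin.cons_succ,
    sum_filter, mul_sum]
  congr 1 <;> refine sum_congr rfl fun x hx => ?_
  · simp [mem_compl.1 hx]
  · by_cases hxS : x ∈ S <;> simp [hx, hxS]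

/-- The `N.descFactorial #S` injections `S → Fin N` place the values in `S`; the other
`N - #S` arguments take values outside `A`. -/
lemma sum_prod_hitsExactly (p : β → R) {A S : Finset β} (hS : S ⊆ A) (N : ℕ) :
    ∑ f : Fin N → β with HitsExactly A S f, ∏ v, p (f v) =
      N.descFactorial #S * (∏ b ∈ S, p b) * (∑ b ∈ Aᶜ, p b) ^ (N - #S) := by
  induction N generalizing S with
  | zero =>
    simp only [hitsExactly_iff_of_isEmpty hS, univ_unique, filter_singleton]
    rcases S.eq_empty_or_nonempty with rfl | hne
    · simp
    · simp [hne.ne_empty, Nat.descFactorial_eq_zero_iff_lt.2 hne.card_pos]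
  | succ N ih =>
    have erase_term : ∀ x ∈ S, p x * ∑ f : Fin N → β with HitsExactly A (S.erase x) f,
        ∏ v, p (f v) = N.descFactorial (#S - 1) * (∏ b ∈ S, p b) *
          (∑ b ∈ Aᶜ, p b) ^ (N - (#S - 1)) := fun x hx => by
      rw [ih ((erase_subset x S).trans hS), card_erase_of_mem hx, ← mul_prod_erase S p hx]
      ring
    rw [sum_prod_hitsExactly_succ, inter_eq_right.2 hS, ih hS, sum_congr rfl erase_term,
      sum_const, nsmul_eq_mul, mul_right_comm (((N + 1).descFactorial #S : ℕ) : R),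
      ← cast_succ_descFactorial_mul_pow]
    ring

end SumHitsExactly

lemma forall_mem_insert_eq_ite_iff {ι : Type*} [DecidableEq ι] {c : ι → ℕ} {i : ι}
    {T S : Finset ι} (hi : i ∉ T) (hS : S ⊆ T) :
    ((c i = 1 ∧ ∀ j ∈ T, c j ≤ 1) ∧ {j ∈ T | c j = 1} = S) ↔
      ∀ j ∈ insert i T, c j = if j ∈ insert i S then 1 else 0 := by
  constructor
  · rintro ⟨⟨hci, hle⟩, rfl⟩ j hj
    rcases mem_insert.1 hj with rfl | hjT
    · simpa using hci
    · have hji : j ≠ i := ne_of_mem_of_not_mem hjT hi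
      have := hle j hjT
      by_cases hcj : c j = 1
      · simp [hji, hjT, hcj]
      · simp [hji, hjT, hcj]
        omega
  · intro h
    refine ⟨⟨by simpa using h i (mem_insert_self i T), fun j hj => ?_⟩, ?_⟩
    · have := h j (mem_insert_of_mem hj)
      split_ifs at this <;> omega
    · ext j
      simp only [mem_filter]
      constructor
      · rintro ⟨hjT, hcj⟩
        have := h j (mem_insert_of_mem hjT)
        rw [hcj] at this
        split_ifs at this with hj
        exact (mem_insert.1 hj).resolve_left (ne_of_mem_of_not_mem hjT hi)
      · intro hjS
        have := h j (mem_insert_of_mem (hS hjS))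
        exact ⟨hS hjS, by simpa [hjS] using this⟩

section Model

variable {M N n : ℕ}

lemma levelCount_eq_fiberCard (ω : Fin N → Fin M × Fin n) (s : Fin M) (i : Fin n) :
    levelCount ω s i = fiberCard ω (s, i) := by
  simp only [levelCount, fiberCard, Prod.ext_iff]

lemma card_filter_sanpcDecoded (ω : Fin N → Fin M × Fin n) :
    #{u | sanpcDecoded ω u} =
      #{x : Fin M × Fin n | fiberCard ω x = 1 ∧ ∀ j < x.2, fiberCard ω (x.1, j) ≤ 1} := by
  simp only [sanpcDecoded, levelCount_eq_fiberCard]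
  exact card_filter_fiberCard_eq_one ω fun x => ∀ j < x.2, fiberCard ω (x.1, j) ≤ 1

lemma sum_filter_decodable_eq_sum_powerset (w : (Fin N → Fin M × Fin n) → ℝ) (s : Fin M)
    (i : Fin n) :
    ∑ ω with fiberCard ω (s, i) = 1 ∧ ∀ j < i, fiberCard ω (s, j) ≤ 1, w ω =
      ∑ S ∈ (Iio i).powerset,
        ∑ ω with HitsExactly ((Iic i).image (s, ·)) ((insert i S).image (s, ·)) ω, w ω := by
  rw [← sum_fiberwise_of_maps_to (t := (Iio i).powerset)
    (g := fun ω => {j ∈ Iio i | fiberCard ω (s, j) = 1}) (fun _ _ => by simp [filter_subset])]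
  refine sum_congr rfl fun S hS => ?_
  rw [filter_filter]
  refine sum_congr (filter_congr fun ω _ => ?_) fun _ _ => rfl
  rw [hitsExactly_image_iff (Prod.mk_right_injective s), ← Iio_insert,
    ← forall_mem_insert_eq_ite_iff notMem_Iio_self (mem_powerset.1 hS)]
  simp only [mem_Iio]

lemma sum_sanpcWeight_decodable (hM : M ≠ 0) (δ : Fin n → ℝ) (hδ : ∑ i, δ i = 1) (s : Fin M)
    (i : Fin n) :
    ∑ ω with fiberCard ω (s, i) = 1 ∧ ∀ j < i, fiberCard ω (s, j) ≤ 1, sanpcWeight M N n δ ω =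
      ∑ S ∈ (Iio i).powerset, N.descFactorial (#S + 1) / (M : ℝ) ^ (#S + 1) *
        (δ i * ∏ j ∈ S, δ j) * (1 - (∑ j ∈ Iic i, δ j) / M) ^ (N - (#S + 1)) := by
  set p : Fin M × Fin n → ℝ := fun y => 1 / (M : ℝ) * δ y.2
  have hw : ∀ ω, sanpcWeight M N n δ ω = ∏ v, p (ω v) := fun _ => rfl
  have hinj : Function.Injective (Prod.mk s : Fin n → Fin M × Fin n) := Prod.mk_right_injective s
  have hsum : ∑ y, p y = 1 := by
    simp [p, Fintype.sum_prod_type, ← mul_sum, hδ, hM]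
  simp only [hw, sum_filter_decodable_eq_sum_powerset]
  refine sum_congr rfl fun S hS => ?_
  have hiS : i ∉ S := fun h => notMem_Iio_self (mem_powerset.1 hS h)
  have hsub : insert i S ⊆ Iic i :=
    insert_subset (mem_Iic.2 le_rfl) ((mem_powerset.1 hS).trans Iio_subset_Iic_self)
  have hcompl : ∑ y ∈ ((Iic i).image (s, ·))ᶜ, p y = 1 - (∑ j ∈ Iic i, δ j) / M := by
    rw [eq_sub_iff_add_eq, ← hsum, ← sum_compl_add_sum ((Iic i).image (s, ·)),
      sum_image fun _ _ _ _ h => hinj h, sum_div]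
    simp only [p, one_div_mul_eq_div]
  rw [sum_prod_hitsExactly p (image_subset_image hsub), hcompl,
    card_image_of_injective _ hinj, card_insert_of_notMem hiS,
    prod_image fun _ _ _ _ h => hinj h, prod_insert hiS]
  simp only [p, prod_mul_distrib, prod_const, pow_succ]
  ring

lemma sanpcExpected_eq (hM : M ≠ 0) (δ : Fin n → ℝ) (hδ : ∑ i, δ i = 1) :
    sanpcExpected M N n δ = M * ∑ i, ∑ S ∈ (Iio i).powerset,
      N.descFactorial (#S + 1) / (M : ℝ) ^ (#S + 1) * (δ i * ∏ j ∈ S, δ j) *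
        (1 - (∑ j ∈ Iic i, δ j) / M) ^ (N - (#S + 1)) := by
  simp only [sanpcExpected, card_filter_sanpcDecoded, natCast_card_filter, mul_sum, mul_boole]
  rw [sum_comm, Fintype.sum_prod_type]
  simp only [← sum_filter, sum_sanpcWeight_decodable hM δ hδ, sum_const, card_univ,
    Fintype.card_fin, nsmul_eq_mul, mul_sum]

end Model

section Limits

variable {u : ℕ → ℕ} {g : ℝ}

lemma tendsto_natCast_tsub_div (hu : Tendsto (fun M : ℕ => (u M : ℝ) / M) atTop (𝓝 g)) (t : ℕ) :
    Tendsto (fun M : ℕ => ((u M - t : ℕ) : ℝ) / M) atTop (𝓝 g) := by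
  have lower : Tendsto (fun M : ℕ => ((u M : ℝ) - t) / M) atTop (𝓝 g) := by
    simpa [sub_div] using hu.sub (tendsto_const_div_atTop_nhds_zero_nat (t : ℝ))
  refine tendsto_of_tendsto_of_tendsto_of_le_of_le lower hu (fun M => ?_) fun M => ?_ <;>
    gcongr
  · exact sub_le_iff_le_add.2 (by rw [← Nat.cast_add]; exact Nat.cast_le.2 le_tsub_add)
  · exact_mod_cast tsub_le_self

lemma tendsto_descFactorial_div_pow (hu : Tendsto (fun M : ℕ => (u M : ℝ) / M) atTop (𝓝 g))
    (k : ℕ) :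
    Tendsto (fun M : ℕ => ((u M).descFactorial k : ℝ) / (M : ℝ) ^ k) atTop (𝓝 (g ^ k)) := by
  have := tendsto_finsetProd (range k) fun t _ => tendsto_natCast_tsub_div hu t
  simpa [Nat.descFactorial_eq_prod_range, prod_div_distrib] using this

lemma tendsto_one_sub_div_pow (hu : Tendsto (fun M : ℕ => (u M : ℝ) / M) atTop (𝓝 g)) (c : ℝ) :
    Tendsto (fun M : ℕ => (1 - c / M) ^ u M) atTop (𝓝 (Real.exp (-(g * c)))) := by
  have hlog : Tendsto (fun M : ℕ => (M : ℝ) * Real.log (1 - c / M)) atTop (𝓝 (-c)) := by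
    simpa [Function.comp_def, neg_div, ← sub_eq_add_neg] using
      (Real.tendsto_mul_log_one_add_div_atTop (-c)).comp tendsto_natCast_atTop_atTop
  have hpos : ∀ᶠ M : ℕ in atTop, 0 < 1 - c / M :=
    ((tendsto_const_div_atTop_nhds_zero_nat c).const_sub 1).eventually
      (lt_mem_nhds (by norm_num))
  rw [← mul_neg]
  refine ((Real.continuous_exp.tendsto _).comp (hu.mul hlog)).congr' ?_
  filter_upwards [hpos, eventually_ne_atTop 0] with M hM hM0
  rw [Function.comp_apply, ← mul_assoc, div_mul_cancel₀ _ (Nat.cast_ne_zero.2 hM0),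
    Real.exp_nat_mul, Real.exp_log hM]

end Limits

lemma sum_powerset_pow_mul_exp {ι : Type*} [LinearOrder ι] [LocallyFiniteOrderBot ι] (g : ℝ)
    (δ : ι → ℝ) (i : ι) :
    ∑ S ∈ (Iio i).powerset,
        g ^ (#S + 1) * (δ i * ∏ j ∈ S, δ j) * Real.exp (-(g * ∑ j ∈ Iic i, δ j)) =
      (∏ j ∈ Iio i, (1 + g * δ j) * Real.exp (-(g * δ j))) * (g * δ i * Real.exp (-(g * δ i))) := by
  have hexp : Real.exp (-(g * ∑ j ∈ Iic i, δ j)) =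
      Real.exp (-(g * δ i)) * ∏ j ∈ Iio i, Real.exp (-(g * δ j)) := by
    rw [← Iio_insert, sum_insert notMem_Iio_self, ← Real.exp_sum, ← Real.exp_add, mul_add,
      mul_sum, neg_add, sum_neg_distrib]
  rw [prod_mul_distrib, prod_one_add, hexp, sum_mul, sum_mul]
  refine sum_congr rfl fun S _ => ?_
  rw [prod_mul_distrib, prod_const]
  ring

theorem tendsto_sanpcExpected_div {u : ℕ → ℕ} {g : ℝ}
    (hu : Tendsto (fun M : ℕ => (u M : ℝ) / M) atTop (𝓝 g)) {n : ℕ} (δ : Fin n → ℝ)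
    (hδ : ∑ i, δ i = 1) :
    Tendsto (fun M : ℕ => sanpcExpected M (u M) n δ / M) atTop
      (𝓝 (∑ i : Fin n, (∏ j ∈ Iio i, (1 + g * δ j) * Real.exp (-(g * δ j))) *
        (g * δ i * Real.exp (-(g * δ i))))) := by
  simp only [← sum_powerset_pow_mul_exp]
  refine (tendsto_finsetSum _ fun i _ => tendsto_finsetSum _ fun S _ =>
    ((tendsto_descFactorial_div_pow hu _).mul_const _).mul
      (tendsto_one_sub_div_pow (tendsto_natCast_tsub_div hu (#S + 1)) _)).congr' ?_
  filter_upwards [eventually_ne_atTop 0] with M hM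
  rw [sanpcExpected_eq hM δ hδ, mul_div_cancel_left₀ _ (Nat.cast_ne_zero.2 hM)]

theorem sa_npc_asymptotic_throughput_general (g : ℝ) (hg : 0 < g) (n : ℕ)
    (δ : Fin n → ℝ) (hδsum : ∑ i, δ i = 1) :
    Tendsto (fun M : ℕ => sanpcExpected M ⌊g * (M : ℝ)⌋₊ n δ / (M : ℝ)) atTop
      (nhds (∑ i : Fin n,
        (∏ j ∈ Finset.Iio i, (1 + g * δ j) * Real.exp (-(g * δ j))) *
          (g * δ i * Real.exp (-(g * δ i))))) :=
  tendsto_sanpcExpected_div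
    ((tendsto_nat_floor_mul_div_atTop hg.le).comp tendsto_natCast_atTop_atTop) δ hδsum

/-- The asymptotic throughput of SA-nPC at load `g` with power-choice distribution `δ` is
`∑_{i=1}^{n} (∏_{j=1}^{i-1} (1+gδⱼ) e^{-gδⱼ}) gδᵢ e^{-gδᵢ}`. -/
theorem sa_npc_asymptotic_throughput (g : ℝ) (hg : 0 < g) (n : ℕ) (hn : 1 ≤ n)
    (δ : Fin n → ℝ) (hδ : ∀ i, 0 ≤ δ i) (hδsum : ∑ i, δ i = 1) :
    Tendsto (fun M : ℕ => sanpcExpected M ⌊g * (M : ℝ)⌋₊ n δ / (M : ℝ)) atTop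
      (nhds (∑ i : Fin n,
        (∏ j ∈ Finset.Iio i, (1 + g * δ j) * Real.exp (-(g * δ j))) *
          (g * δ i * Real.exp (-(g * δ i))))) :=
  sa_npc_asymptotic_throughput_general g hg n δ hδsum
end

section
/- (Upper Bound 1) Let Λ be a repetition distribution with rate R and edge-perspective distribution λ, let T > 0 and δ ∈ [0,1], and set a = RT. If the density-evolution success condition λ(f_p(q)) ≤ q holds for every q ∈ (0,1], then (δ² − 2)/(RT) + exp(−RT)·((1 − δ²)/(RT) + δ(1−δ)) + exp(−RTδ)/(RT) + 1/R ≤ 0. -/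
/-- The slot-node density-evolution update of IRSA-DPC:
`f_p(q) = 1 - (1-δ)e^{-aq} - δe^{-aδq} - δ(1-δ)aq e^{-aq}`. -/
noncomputable def fp (a δ q : ℝ) : ℝ :=
  1 - (1 - δ) * Real.exp (-(a * q)) - δ * Real.exp (-(a * δ * q)) -
    δ * (1 - δ) * a * q * Real.exp (-(a * q))

/-!
Area argument. With `F` a primitive of `f = f_p`, `Λ̃(y) = Λ(y)/R` (so that `Λ̃' = λ`) and
`V(q) = F(q) - q f(q) + Λ̃(f(q))`, one has `V'(q) = f'(q) (λ(f(q)) - q) ≤ 0` on `[0,1]`, since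
`f` is nondecreasing there and the success condition holds. Hence `V(1) ≤ V(0) = F(0)`.
Because `λ ≤ 1` on `[0,1]`, `y ↦ y - Λ̃(y)` is nondecreasing, so
`f(1) - Λ̃(f(1)) ≤ 1 - Λ̃(1) = 1 - 1/R`. Together, `F(1) - F(0) ≤ 1 - 1/R`, which is the bound.
-/

open Real Set

section Calculus

variable {f f' F G g : ℝ → ℝ} {a b : ℝ}

theorem antitoneOn_primitive_sub_mul_add_comp
    (hF : ∀ x, HasDerivAt F (f x) x) (hf : ∀ x, HasDerivAt f (f' x) x)
    (hG : ∀ y, HasDerivAt G (g y) y) (hf' : ∀ x ∈ Ioo a b, 0 ≤ f' x)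
    (hg : ∀ x ∈ Ioo a b, g (f x) ≤ x) :
    AntitoneOn (fun x => F x - x * f x + G (f x)) (Icc a b) := by
  have hV : ∀ x, HasDerivAt (fun x => F x - x * f x + G (f x)) (f' x * (g (f x) - x)) x := by
    intro x
    refine (((hF x).sub ((hasDerivAt_id x).mul (hf x))).add
      ((hG (f x)).comp x (hf x))).congr_deriv ?_
    simp only [id]
    ring
  refine antitoneOn_of_deriv_nonpos (convex_Icc a b)
    (fun x _ => (hV x).continuousAt.continuousWithinAt)
    (fun x _ => (hV x).differentiableAt.differentiableWithinAt) fun x hx => ?_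
  rw [interior_Icc] at hx
  rw [(hV x).deriv]
  exact mul_nonpos_of_nonneg_of_nonpos (hf' x hx) (sub_nonpos.mpr (hg x hx))

theorem monotoneOn_id_sub_of_hasDerivAt_le_one
    (hG : ∀ y, HasDerivAt G (g y) y) (hg : ∀ y ∈ Ioo a b, g y ≤ 1) :
    MonotoneOn (fun y => y - G y) (Icc a b) := by
  have hV : ∀ y, HasDerivAt (fun y => y - G y) (1 - g y) y :=
    fun y => (hasDerivAt_id' y).sub (hG y)
  refine monotoneOn_of_deriv_nonneg (convex_Icc a b)
    (fun y _ => (hV y).continuousAt.continuousWithinAt)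
    (fun y _ => (hV y).differentiableAt.differentiableWithinAt) fun y hy => ?_
  rw [interior_Icc] at hy
  rw [(hV y).deriv]
  exact sub_nonneg.mpr (hg y hy)

end Calculus

section DegreeDistribution

variable (D : ℕ) (Λ : ℕ → ℝ) (R : ℝ)

/-- `Λ(y) / R`; its derivative `edgeGen` is the edge-perspective distribution `λ`. -/
noncomputable def nodeGen (y : ℝ) : ℝ :=
  ∑ l ∈ Finset.Icc 1 D, Λ l / R * y ^ l

noncomputable def edgeGen (y : ℝ) : ℝ :=
  ∑ l ∈ Finset.Icc 1 D, (l : ℝ) * Λ l / R * y ^ (l - 1)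

theorem hasDerivAt_nodeGen (y : ℝ) : HasDerivAt (nodeGen D Λ R) (edgeGen D Λ R y) y := by
  have h := HasDerivAt.fun_sum (u := Finset.Icc 1 D) fun l _ =>
    (hasDerivAt_pow l y).const_mul (Λ l / R)
  refine h.congr_deriv (Finset.sum_congr rfl fun l _ => ?_)
  ring

theorem nodeGen_zero : nodeGen D Λ R 0 = 0 :=
  Finset.sum_eq_zero fun l hl => by
    rw [zero_pow (Nat.one_le_iff_ne_zero.mp (Finset.mem_Icc.1 hl).1), mul_zero]

variable {D Λ R}

theorem nodeGen_one (hΛsum : ∑ l ∈ Finset.Icc 1 D, Λ l = 1) : nodeGen D Λ R 1 = 1 / R := by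
  simp only [nodeGen, one_pow, mul_one, ← Finset.sum_div, hΛsum]

theorem edgeGen_le_one (hΛ : ∀ l, 0 ≤ Λ l) (hR : R = ∑ l ∈ Finset.Icc 1 D, (l : ℝ) * Λ l)
    (hRpos : 0 < R) {y : ℝ} (hy₀ : 0 ≤ y) (hy₁ : y ≤ 1) : edgeGen D Λ R y ≤ 1 :=
  calc edgeGen D Λ R y ≤ ∑ l ∈ Finset.Icc 1 D, (l : ℝ) * Λ l / R :=
        Finset.sum_le_sum fun l _ => mul_le_of_le_one_right
          (div_nonneg (mul_nonneg l.cast_nonneg (hΛ l)) hRpos.le) (pow_le_one₀ hy₀ hy₁)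
    _ = 1 := by rw [← Finset.sum_div, ← hR, div_self hRpos.ne']

end DegreeDistribution

section SlotUpdate

variable {a δ : ℝ}

noncomputable def fpPrimitive (a δ q : ℝ) : ℝ :=
  q + (1 - δ) * exp (-(a * q)) / a + exp (-(a * δ * q)) / a +
    δ * (1 - δ) * (q + 1 / a) * exp (-(a * q))

noncomputable def fpDeriv (a δ q : ℝ) : ℝ :=
  a * (1 - δ) * (1 - δ + δ * (a * q)) * exp (-(a * q)) + a * δ ^ 2 * exp (-(a * δ * q))

theorem hasDerivAt_exp_neg_mul (c q : ℝ) :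
    HasDerivAt (fun x => exp (-(c * x))) (-c * exp (-(c * q))) q := by
  simpa [mul_comm] using (((hasDerivAt_id q).const_mul c).neg).exp

theorem hasDerivAt_fp (a δ q : ℝ) : HasDerivAt (fp a δ) (fpDeriv a δ q) q := by
  have hlin : HasDerivAt (fun x => δ * (1 - δ) * a * x) (δ * (1 - δ) * a) q := by
    simpa using (hasDerivAt_id q).const_mul (δ * (1 - δ) * a)
  refine ((((hasDerivAt_const q 1).sub ((hasDerivAt_exp_neg_mul a q).const_mul (1 - δ))).sub
    ((hasDerivAt_exp_neg_mul (a * δ) q).const_mul δ)).sub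
    (hlin.mul (hasDerivAt_exp_neg_mul a q))).congr_deriv ?_
  simp only [fpDeriv]
  ring

theorem hasDerivAt_fpPrimitive (ha : a ≠ 0) (q : ℝ) :
    HasDerivAt (fpPrimitive a δ) (fp a δ q) q := by
  have hlin : HasDerivAt (fun x => δ * (1 - δ) * (x + 1 / a)) (δ * (1 - δ)) q := by
    simpa using ((hasDerivAt_id q).add_const (1 / a)).const_mul (δ * (1 - δ))
  refine ((((hasDerivAt_id q).add
    (((hasDerivAt_exp_neg_mul a q).const_mul (1 - δ)).div_const a)).add
    ((hasDerivAt_exp_neg_mul (a * δ) q).div_const a)).add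
    (hlin.mul (hasDerivAt_exp_neg_mul a q))).congr_deriv ?_
  simp only [fp]
  field_simp
  ring

theorem fpDeriv_nonneg (ha : 0 ≤ a) (hδ : δ ∈ Icc (0 : ℝ) 1) {q : ℝ} (hq : 0 ≤ q) :
    0 ≤ fpDeriv a δ q := by
  obtain ⟨hδ₀, hδ₁⟩ := hδ
  have h1δ : 0 ≤ 1 - δ := sub_nonneg.mpr hδ₁
  unfold fpDeriv
  positivity

theorem fp_zero : fp a δ 0 = 0 := by
  simp [fp]

theorem fp_mem_Icc (ha : 0 ≤ a) (hδ : δ ∈ Icc (0 : ℝ) 1) {q : ℝ} (hq : 0 ≤ q) :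
    fp a δ q ∈ Icc (0 : ℝ) 1 := by
  obtain ⟨hδ₀, hδ₁⟩ := hδ
  set x := a * q with hx
  have hx₀ : 0 ≤ x := mul_nonneg ha hq
  have h1δ : 0 ≤ 1 - δ := sub_nonneg.mpr hδ₁
  have hfp : fp a δ q = 1 - (1 - δ) * (1 + δ * x) * exp (-x) - δ * exp (-(x * δ)) := by
    simp only [fp, hx]
    ring_nf
  have hpoly : (1 + δ * x) * exp (-x) ≤ 1 :=
    calc (1 + δ * x) * exp (-x) ≤ exp x * exp (-x) := by
          gcongr
          nlinarith [add_one_le_exp x]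
      _ = 1 := by rw [← exp_add, add_neg_cancel, exp_zero]
  have hexp : exp (-(x * δ)) ≤ 1 := exp_le_one_iff.mpr (by nlinarith)
  rw [hfp]
  constructor
  · nlinarith [mul_le_mul_of_nonneg_left hpoly h1δ, mul_le_mul_of_nonneg_left hexp hδ₀]
  · have hδx : 0 ≤ 1 + δ * x := by nlinarith
    linarith [mul_nonneg (mul_nonneg h1δ hδx) (exp_pos (-x)).le,
      mul_nonneg hδ₀ (exp_pos (-(x * δ))).le]

end SlotUpdate

/-- **Upper Bound 1.** If the density-evolution success condition `λ(f_p(q)) ≤ q` holds for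
every `q ∈ (0,1]` (with `a = RT`), where `λ(x) = ∑_l (l Λ_l / R) x^{l-1}` is the
edge-perspective distribution of the repetition distribution `Λ` with rate `R = ∑_l l Λ_l > 0`,
then the throughput `T` satisfies
`(δ²-2)/(RT) + e^{-RT}((1-δ²)/(RT) + δ(1-δ)) + e^{-RTδ}/(RT) + 1/R ≤ 0`. -/
theorem irsa_dpc_upper_bound_1 (D : ℕ) (Λ : ℕ → ℝ) (hΛ : ∀ l, 0 ≤ Λ l)
    (hΛsum : ∑ l ∈ Finset.Icc 1 D, Λ l = 1)
    (R T δ : ℝ) (hR : R = ∑ l ∈ Finset.Icc 1 D, (l : ℝ) * Λ l) (hRpos : 0 < R)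
    (hT : 0 < T) (hδ : δ ∈ Set.Icc (0 : ℝ) 1)
    (hDE : ∀ q ∈ Set.Ioc (0 : ℝ) 1,
      (∑ l ∈ Finset.Icc 1 D, ((l : ℝ) * Λ l / R) * (fp (R * T) δ q) ^ (l - 1)) ≤ q) :
    (δ ^ 2 - 2) / (R * T) +
        Real.exp (-(R * T)) * ((1 - δ ^ 2) / (R * T) + δ * (1 - δ)) +
        Real.exp (-(R * T * δ)) / (R * T) + 1 / R ≤ 0 := by
  set a := R * T
  have ha : 0 < a := mul_pos hRpos hT
  have hunit : (1 : ℝ) ∈ Icc (0 : ℝ) 1 := right_mem_Icc.mpr zero_le_one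
  have harea := antitoneOn_primitive_sub_mul_add_comp
    (hasDerivAt_fpPrimitive ha.ne') (hasDerivAt_fp a δ) (hasDerivAt_nodeGen D Λ R)
    (fun q hq => fpDeriv_nonneg ha.le hδ hq.1.le) (fun q hq => hDE q (Ioo_subset_Ioc_self hq))
    (left_mem_Icc.mpr zero_le_one) hunit zero_le_one
  have hf₁ := fp_mem_Icc ha.le hδ zero_le_one
  have hnode := monotoneOn_id_sub_of_hasDerivAt_le_one (hasDerivAt_nodeGen D Λ R)
    (fun y hy => edgeGen_le_one hΛ hR hRpos hy.1.le hy.2.le)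
    hf₁ hunit hf₁.2
  simp only [fp_zero, nodeGen_zero, nodeGen_one hΛsum] at harea hnode
  have hprim : fpPrimitive a δ 1 - fpPrimitive a δ 0 =
      (δ ^ 2 - 2) / a + exp (-a) * ((1 - δ ^ 2) / a + δ * (1 - δ)) + exp (-(a * δ)) / a + 1 := by
    simp only [fpPrimitive, mul_one, mul_zero, neg_zero, exp_zero]
    ring
  linarith
end

section
/- (Rate-Independent Upper Bound) Let R > 0, T > 0 and δ ∈ [0,1]. If (δ² − 2)/(RT) + exp(−RT)·((1 − δ²)/(RT) + δ(1−δ)) + exp(−RTδ)/(RT) + 1/R ≤ 0, then T ≤ 2 − δ². -/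
/-! Both exponential terms of the condition are nonnegative for `δ ∈ [0,1]`, so the condition
forces `(δ² - 2)/(RT) + 1/R = (δ² - 2 + T)/(RT) ≤ 0`, i.e. `T ≤ 2 - δ²`. -/

open Real Set

lemma exp_neg_mul_add_exp_neg_div_nonneg {x δ : ℝ} (hx : 0 < x) (hδ : δ ∈ Icc (0 : ℝ) 1) :
    0 ≤ exp (-x) * ((1 - δ ^ 2) / x + δ * (1 - δ)) + exp (-(x * δ)) / x := by
  obtain ⟨hδ0, hδ1⟩ := hδ
  have hsq : δ ^ 2 ≤ 1 := pow_le_one₀ hδ0 hδ1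
  have hbracket : 0 ≤ (1 - δ ^ 2) / x + δ * (1 - δ) :=
    add_nonneg (div_nonneg (by linarith) hx.le) (mul_nonneg hδ0 (by linarith))
  exact add_nonneg (mul_nonneg (exp_pos _).le hbracket) (div_nonneg (exp_pos _).le hx.le)

lemma div_mul_add_one_div {R T : ℝ} (hR : R ≠ 0) (hT : T ≠ 0) (a : ℝ) :
    a / (R * T) + 1 / R = (a + T) / (R * T) := by
  field_simp

/-- **Rate-Independent Upper Bound.** If the necessary condition of Upper Bound 1 holds,
namely `(δ²-2)/(RT) + e^{-RT}((1-δ²)/(RT) + δ(1-δ)) + e^{-RTδ}/(RT) + 1/R ≤ 0`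
with `R > 0`, `T > 0` and `δ ∈ [0,1]`, then `T ≤ 2 - δ²`. -/
theorem irsa_dpc_rate_independent_upper_bound (R T δ : ℝ) (hR : 0 < R) (hT : 0 < T)
    (hδ : δ ∈ Set.Icc (0 : ℝ) 1)
    (h : (δ ^ 2 - 2) / (R * T) +
        Real.exp (-(R * T)) * ((1 - δ ^ 2) / (R * T) + δ * (1 - δ)) +
        Real.exp (-(R * T * δ)) / (R * T) + 1 / R ≤ 0) :
    T ≤ 2 - δ ^ 2 := by
  have hRT : 0 < R * T := mul_pos hR hT
  have hmain : (δ ^ 2 - 2 + T) / (R * T) ≤ 0 := by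
    rw [← div_mul_add_one_div hR.ne' hT.ne']
    linarith [exp_neg_mul_add_exp_neg_div_nonneg hRT hδ]
  linarith [(div_le_iff₀ hRT).1 hmain]
end

section
/- (Upper Bound 2) Let f : [0,1] → [0,1] be measurable and h : [0,1] → [0,1] be nondecreasing and convex with h(1) = 1, and suppose h(f(q)) ≤ q for every q ∈ (0,1]. Let q_c ∈ (0,1), set p_c = f(q_c), assume p_c < 1, and let l(p) = q_c + (1 − q_c)·(p − p_c)/(1 − p_c) be the line through (p_c, q_c) and (1,1). Then ∫₀¹ h(p) dp + ∫₀¹ f(q) dq + vol{ (p,q) ∈ [0,1]² : p_c ≤ p, l(p) ≤ q, f(q) ≤ p } ≤ 1, where vol denotes two-dimensional Lebesgue measure. -/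
open MeasureTheory Set

/-! The three regions `{q < h p}`, `{p < f q}` and the set `C` of the statement are pairwise disjoint
subsets of the unit square, so their areas add up to at most `1`. The first two are disjoint because
`q < h p ≤ h (f q) ≤ q` when `p < f q`; the first and third because, by convexity, `h` lies below
the chord from `(p_c, h p_c)` to `(1, h 1) = (1, 1)`, hence below `l` on `[p_c, 1]` as `h p_c ≤ q_c`. -/

theorem ConvexOn.mul_le_of_mem_Icc {𝕜 : Type*} [Field 𝕜] [LinearOrder 𝕜] [IsStrictOrderedRing 𝕜]
    {s : Set 𝕜} {f : 𝕜 → 𝕜} (hf : ConvexOn 𝕜 s f) {x y z : 𝕜} (hx : x ∈ s) (hz : z ∈ s)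
    (hy : y ∈ Icc x z) : (z - x) * f y ≤ (z - y) * f x + (y - x) * f z := by
  rcases hy.1.eq_or_lt with rfl | hxy
  · simp
  rcases hy.2.eq_or_lt with rfl | hyz
  · simp
  exact hf.secant_mono_aux1 hx hz hxy hyz

theorem ConvexOn.le_line_of_le_of_le {𝕜 : Type*} [Field 𝕜] [LinearOrder 𝕜]
    [IsStrictOrderedRing 𝕜] {s : Set 𝕜} {f : 𝕜 → 𝕜} (hf : ConvexOn 𝕜 s f) {a b c d x : 𝕜}
    (ha : a ∈ s) (hb : b ∈ s) (hab : a < b) (hfa : f a ≤ c) (hfb : f b ≤ d) (hx : x ∈ Icc a b) :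
    f x ≤ c + (d - c) * (x - a) / (b - a) := by
  have hchord := hf.mul_le_of_mem_Icc ha hb hx
  have hca := mul_le_mul_of_nonneg_left hfa (sub_nonneg.2 hx.2)
  have hdb := mul_le_mul_of_nonneg_left hfb (sub_nonneg.2 hx.1)
  rw [← sub_le_iff_le_add', le_div_iff₀ (sub_pos.2 hab)]
  linarith

theorem regionBetween_subset_prod_Icc {α : Type*} {f g : α → ℝ} {s : Set α} {a b : ℝ}
    (hf : ∀ x ∈ s, a ≤ f x) (hg : ∀ x ∈ s, g x ≤ b) : regionBetween f g s ⊆ s ×ˢ Icc a b :=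
  fun _ ⟨hx, hfy, hyg⟩ => ⟨hx, (hf _ hx).trans hfy.le, hyg.le.trans (hg _ hx)⟩

theorem disjoint_regionBetween_zero_preimage_swap {f h : ℝ → ℝ} {s t : Set ℝ}
    (hh : MonotoneOn h s) (hf : MapsTo f t s) (hhf : ∀ q ∈ t, h (f q) ≤ q) :
    Disjoint (regionBetween 0 h s) (Prod.swap ⁻¹' regionBetween 0 f t) := by
  rw [Set.disjoint_left]
  rintro ⟨p, q⟩ ⟨hp, -, hqh⟩ ⟨hq, -, hpf⟩
  have : h p ≤ h (f q) := hh hp (hf hq) hpf.le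
  linarith [hhf q hq]

theorem measureReal_regionBetween_zero {α : Type*} [MeasurableSpace α] {μ : Measure α}
    [SigmaFinite μ] {g : α → ℝ} {s : Set α} (hs : MeasurableSet s) (hg : IntegrableOn g s μ)
    (hg0 : ∀ x ∈ s, 0 ≤ g x) : (μ.prod volume).real (regionBetween 0 g s) = ∫ x in s, g x ∂μ := by
  rw [Measure.real, volume_regionBetween_eq_integral (f := 0) integrableOn_zero hg hs hg0, sub_zero,
    ENNReal.toReal_ofReal (setIntegral_nonneg hs hg0)]

theorem measureReal_preimage_swap_regionBetween_zero {g : ℝ → ℝ} {s : Set ℝ} (hg : Measurable g)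
    (hs : MeasurableSet s) (hg_int : IntegrableOn g s) (hg0 : ∀ x ∈ s, 0 ≤ g x) :
    volume.real (Prod.swap ⁻¹' regionBetween 0 g s) = ∫ x in s, g x := by
  rw [Measure.volume_eq_prod, Measure.measurePreserving_swap.measureReal_preimage
    (measurableSet_regionBetween measurable_zero hg hs).nullMeasurableSet,
    measureReal_regionBetween_zero hs hg_int hg0]

theorem measureReal_add_add_le {α : Type*} [MeasurableSpace α] {μ : Measure α} {s t u K : Set α}
    (hst : Disjoint s t) (hsu : Disjoint s u) (htu : Disjoint t u)
    (ht : MeasurableSet t) (hu : MeasurableSet u) (hK : s ∪ t ∪ u ⊆ K) (hKfin : μ K ≠ ⊤) :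
    μ.real s + μ.real t + μ.real u ≤ μ.real K := by
  have fin : ∀ v ⊆ K, μ v ≠ ⊤ := fun v hv => ne_top_of_le_ne_top hKfin (measure_mono hv)
  rw [← measureReal_union hst ht (fin s (by grind)) (fin t (by grind)),
    ← measureReal_union (hsu.union_left htu) hu (fin _ (by grind)) (fin u (by grind))]
  exact measureReal_mono hK hKfin

theorem integral_add_integral_add_measureReal_le_one {f h : ℝ → ℝ} {C : Set (ℝ × ℝ)}
    (hf : Measurable f) (hfmap : MapsTo f (Ioc 0 1) (Icc 0 1)) (hhmono : MonotoneOn h (Icc 0 1))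
    (hhmap : MapsTo h (Icc 0 1) (Icc 0 1)) (hhf : ∀ q ∈ Ioc 0 1, h (f q) ≤ q)
    (hC : MeasurableSet C) (hC_sub : C ⊆ Icc 0 1 ×ˢ Icc 0 1) (hCh : ∀ x ∈ C, h x.1 ≤ x.2)
    (hCf : ∀ x ∈ C, f x.2 ≤ x.1) :
    (∫ p in (0 : ℝ)..1, h p) + (∫ q in (0 : ℝ)..1, f q) + volume.real C ≤ 1 := by
  have hAB := disjoint_regionBetween_zero_preimage_swap hhmono hfmap hhf
  have hAC : Disjoint (regionBetween 0 h (Icc 0 1)) C := by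
    rw [Set.disjoint_left]
    rintro ⟨p, q⟩ ⟨-, -, hqh⟩ hpq
    linarith [hCh _ hpq]
  have hBC : Disjoint (Prod.swap ⁻¹' regionBetween 0 f (Ioc 0 1)) C := by
    rw [Set.disjoint_left]
    rintro ⟨p, q⟩ ⟨-, -, hpf : p < f q⟩ hpq
    linarith [hCf _ hpq]
  have hf_int : IntegrableOn f (Ioc 0 1) :=
    Measure.integrableOn_of_bounded (M := 1) (by simp) hf.aestronglyMeasurable
      (ae_restrict_of_forall_mem measurableSet_Ioc fun q hq =>
        abs_le.2 ⟨by linarith [(hfmap hq).1], (hfmap hq).2⟩)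
  have hB : MeasurableSet (Prod.swap ⁻¹' regionBetween 0 f (Ioc 0 1)) :=
    (measurableSet_regionBetween measurable_zero hf measurableSet_Ioc).preimage measurable_swap
  have hA_vol : volume.real (regionBetween 0 h (Icc 0 1)) = ∫ p in (0 : ℝ)..1, h p := by
    rw [Measure.volume_eq_prod, measureReal_regionBetween_zero measurableSet_Icc
      (hhmono.integrableOn_isCompact isCompact_Icc) (fun p hp => (hhmap hp).1),
      intervalIntegral.integral_of_le zero_le_one, integral_Icc_eq_integral_Ioc]
  have hB_vol : volume.real (Prod.swap ⁻¹' regionBetween 0 f (Ioc 0 1)) =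
      ∫ q in (0 : ℝ)..1, f q := by
    rw [measureReal_preimage_swap_regionBetween_zero hf measurableSet_Ioc hf_int
      (fun q hq => (hfmap hq).1), intervalIntegral.integral_of_le zero_le_one]
  have hsub : regionBetween 0 h (Icc 0 1) ∪ Prod.swap ⁻¹' regionBetween 0 f (Ioc 0 1) ∪ C ⊆
      Icc (0 : ℝ) 1 ×ˢ Icc (0 : ℝ) 1 := by
    refine union_subset (union_subset ?_ ?_) hC_sub
    · exact regionBetween_subset_prod_Icc (fun _ _ => le_rfl) fun p hp => (hhmap hp).2
    · rw [← preimage_swap_prod]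
      exact preimage_mono <| (regionBetween_subset_prod_Icc (fun _ _ => le_rfl) fun q hq =>
        (hfmap hq).2).trans (prod_mono Ioc_subset_Icc_self le_rfl)
  rw [← hA_vol, ← hB_vol]
  calc _ ≤ volume.real (Icc (0 : ℝ) 1 ×ˢ Icc (0 : ℝ) 1) :=
        measureReal_add_add_le hAB hAC hBC hB hC hsub
          (isCompact_Icc.prod isCompact_Icc).measure_lt_top.ne
    _ = 1 := by rw [Measure.volume_eq_prod, measureReal_prod_prod]; simp

/-- **Upper Bound 2.** Let `f : [0,1] → [0,1]` be measurable and `h : [0,1] → [0,1]` be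
nondecreasing and convex with `h(1) = 1`, and suppose `h(f(q)) ≤ q` for every `q ∈ (0,1]`.
Let `q_c ∈ (0,1)`, `p_c = f(q_c) < 1`, and let `l` be the line through `(p_c, q_c)` and
`(1,1)`. Then `∫₀¹ h + ∫₀¹ f + vol{(p,q) ∈ [0,1]² : p_c ≤ p, l(p) ≤ q, f(q) ≤ p} ≤ 1`. -/
theorem irsa_dpc_upper_bound_2 (f h : ℝ → ℝ)
    (hf : Measurable f) (hfmap : ∀ q ∈ Set.Icc (0 : ℝ) 1, f q ∈ Set.Icc (0 : ℝ) 1)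
    (hhmono : MonotoneOn h (Set.Icc (0 : ℝ) 1))
    (hhconv : ConvexOn ℝ (Set.Icc (0 : ℝ) 1) h)
    (hhmap : ∀ p ∈ Set.Icc (0 : ℝ) 1, h p ∈ Set.Icc (0 : ℝ) 1)
    (hh1 : h 1 = 1)
    (hDE : ∀ q ∈ Set.Ioc (0 : ℝ) 1, h (f q) ≤ q)
    (qc : ℝ) (hqc : qc ∈ Set.Ioo (0 : ℝ) 1)
    (pc : ℝ) (hpc : pc = f qc) (hpc1 : pc < 1)
    (l : ℝ → ℝ) (hl : ∀ p, l p = qc + (1 - qc) * (p - pc) / (1 - pc)) :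
    (∫ p in (0 : ℝ)..1, h p) + (∫ q in (0 : ℝ)..1, f q) +
      (volume {pq : ℝ × ℝ | pq.1 ∈ Set.Icc (0 : ℝ) 1 ∧ pq.2 ∈ Set.Icc (0 : ℝ) 1 ∧
        pc ≤ pq.1 ∧ l pq.1 ≤ pq.2 ∧ f pq.2 ≤ pq.1}).toReal ≤ 1 := by
  have hpc_mem : pc ∈ Icc (0 : ℝ) 1 := hpc ▸ hfmap qc (Ioo_subset_Icc_self hqc)
  have hhpc : h pc ≤ qc := hpc ▸ hDE qc ⟨hqc.1, hqc.2.le⟩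
  have hl_meas : Measurable l := by rw [funext hl]; fun_prop
  refine integral_add_integral_add_measureReal_le_one hf
    (fun q hq => hfmap q (Ioc_subset_Icc_self hq)) hhmono hhmap hDE ?_
    (fun x hx => ⟨hx.1, hx.2.1⟩) ?_ fun x hx => hx.2.2.2.2
  · exact (measurable_fst measurableSet_Icc).inter <| (measurable_snd measurableSet_Icc).inter <|
      (measurableSet_le measurable_const measurable_fst).inter <|
        (measurableSet_le (hl_meas.comp measurable_fst) measurable_snd).inter
          (measurableSet_le (hf.comp measurable_snd) measurable_fst)
  · rintro ⟨p, q⟩ ⟨hp, -, hpcp, hlq, -⟩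
    calc h p ≤ l p := (hl p).symm ▸ hhconv.le_line_of_le_of_le hpc_mem
          (right_mem_Icc.2 zero_le_one) hpc1 hhpc hh1.le ⟨hpcp, hp.2⟩
      _ ≤ q := hlq
end

section
/- For every natural number j and all reals q, δ ∈ [0,1]: (1−q)^j + 2δ(1−δ)·j·q·(1−q)^{j−1} + ∑_{t=2}^{j} δ·(1−δ)^t·C(j,t)·q^t·(1−q)^{j−t} = (1−q)^j + δ·((1−δq)^j − (1−q)^j) + j·δ(1−δ)·q·(1−q)^{j−1}, where terms involving j·(1−q)^{j−1} are interpreted as 0 when j = 0. -/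
open Finset

theorem Finset.sum_range_add_two_eq_add_add_sum_Icc {M : Type*} [AddCommMonoid M]
    (f : ℕ → M) (n : ℕ) :
    ∑ t ∈ range (n + 2), f t = f 0 + f 1 + ∑ t ∈ Icc 2 (n + 1), f t := by
  rw [range_eq_Ico, sum_eq_sum_Ico_succ_bot (by omega), sum_eq_sum_Ico_succ_bot (by omega),
    ← add_assoc]
  rfl

theorem mul_add_pow_eq_sum {R : Type*} [CommSemiring R] (a x y : R) (j : ℕ) :
    (a * x + y) ^ j = ∑ t ∈ range (j + 1), a ^ t * (j.choose t : R) * x ^ t * y ^ (j - t) := by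
  rw [add_pow]
  refine sum_congr rfl fun t _ => ?_
  rw [mul_pow]
  ring

/-- Up to the factor `δ`, the probability generating function of `Binomial(j, q)` at `1 - δ`. -/
theorem sum_range_mul_one_sub_pow_mul_choose_eq {R : Type*} [CommRing R] (δ q : R) (j : ℕ) :
    ∑ t ∈ range (j + 1), δ * (1 - δ) ^ t * (j.choose t : R) * q ^ t * (1 - q) ^ (j - t) =
      δ * (1 - δ * q) ^ j := by
  rw [show 1 - δ * q = (1 - δ) * q + (1 - q) by ring, mul_add_pow_eq_sum, mul_sum]
  refine sum_congr rfl fun t _ => ?_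
  ring

theorem irsa_dpc_wlt_sum_closed_form_general (j : ℕ) (q δ : ℝ) :
    (1 - q) ^ j + 2 * δ * (1 - δ) * (j : ℝ) * q * (1 - q) ^ (j - 1) +
        ∑ t ∈ Finset.Icc 2 j, δ * (1 - δ) ^ t * (j.choose t : ℝ) * q ^ t * (1 - q) ^ (j - t) =
      (1 - q) ^ j + δ * ((1 - δ * q) ^ j - (1 - q) ^ j) +
        (j : ℝ) * δ * (1 - δ) * q * (1 - q) ^ (j - 1) := by
  rcases j with _ | n
  · simp
  · have h := sum_range_add_two_eq_add_add_sum_Icc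
      (fun t => δ * (1 - δ) ^ t * ((n + 1).choose t : ℝ) * q ^ t * (1 - q) ^ (n + 1 - t)) n
    rw [sum_range_mul_one_sub_pow_mul_choose_eq] at h
    simp only [Nat.choose_zero_right, Nat.choose_one_right, pow_zero, pow_one, Nat.sub_zero,
      Nat.add_sub_cancel] at h ⊢
    push_cast at h ⊢
    linear_combination -h

/-- Closed form of the probability that an edge incident to a slot node of degree `j+1`
with `t` of the other `j` edges unresolved becomes resolved in the IRSA-DPC slot-node
update: for all `j : ℕ` and `q, δ ∈ [0,1]`,
`(1-q)^j + 2δ(1-δ) j q (1-q)^{j-1} + ∑_{t=2}^{j} δ(1-δ)^t C(j,t) q^t (1-q)^{j-t}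
  = (1-q)^j + δ((1-δq)^j - (1-q)^j) + jδ(1-δ)q(1-q)^{j-1}`. -/
theorem irsa_dpc_wlt_sum_closed_form (j : ℕ) (q δ : ℝ)
    (hq : q ∈ Set.Icc (0 : ℝ) 1) (hδ : δ ∈ Set.Icc (0 : ℝ) 1) :
    (1 - q) ^ j + 2 * δ * (1 - δ) * (j : ℝ) * q * (1 - q) ^ (j - 1) +
        ∑ t ∈ Finset.Icc 2 j, δ * (1 - δ) ^ t * (j.choose t : ℝ) * q ^ t * (1 - q) ^ (j - t) =
      (1 - q) ^ j + δ * ((1 - δ * q) ^ j - (1 - q) ^ j) +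
        (j : ℝ) * δ * (1 - δ) * q * (1 - q) ^ (j - 1) :=
  irsa_dpc_wlt_sum_closed_form_general j q δ
end

section
/- (Area lemma) Let f : [0,1] → [0,1] be measurable and h : [0,1] → [0,1] be nondecreasing, and suppose h(f(q)) ≤ q for every q ∈ (0,1]. Then ∫₀¹ h(p) dp + ∫₀¹ f(q) dq ≤ 1. -/
/-!
By the layer-cake formula, `∫₀¹ f = ∫₀¹ |{q ∈ (0,1] | t ≤ f q}| dt`. If `t ≤ f q`, then
`h t ≤ h (f q) ≤ q`, so this superlevel set lies in `[h t, 1]` and has measure at most `1 - h t`;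
integrating over `t` gives `∫₀¹ f ≤ 1 - ∫₀¹ h`.
-/

open MeasureTheory Set

theorem integral_le_setIntegral_Ioc_of_measureReal_le {α : Type*} [MeasurableSpace α]
    {μ : Measure α} {f : α → ℝ} {g : ℝ → ℝ} {M : ℝ} (hf : Integrable f μ)
    (hf0 : 0 ≤ᵐ[μ] f) (hfM : ∀ᵐ a ∂μ, f a ≤ M) (hg : IntegrableOn g (Ioc 0 M))
    (hfg : ∀ t ∈ Ioc 0 M, μ.real {a | t ≤ f a} ≤ g t) :
    ∫ a, f a ∂μ ≤ ∫ t in Ioc 0 M, g t := by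
  have hvanish : ∀ t ∈ Ioi 0 \ Ioc 0 M, μ.real {a | t ≤ f a} = 0 := by
    rintro t ⟨ht0, htM⟩
    have hMt : M < t := lt_of_not_ge fun h => htM ⟨ht0, h⟩
    have hnull : μ {a | t ≤ f a} = 0 := measure_eq_zero_iff_ae_notMem.2 <| by
      filter_upwards [hfM] with a ha hta
      exact absurd (hta.trans ha) (not_le.2 hMt)
    rw [Measure.real, hnull, ENNReal.toReal_zero]
  rw [hf.integral_eq_integral_meas_le hf0,
    setIntegral_eq_of_subset_of_forall_sdiff_eq_zero measurableSet_Ioi Ioc_subset_Ioi_self hvanish]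
  exact integral_mono_of_nonneg (Filter.Eventually.of_forall fun _ => measureReal_nonneg) hg
    (ae_restrict_of_forall_mem measurableSet_Ioc hfg)

theorem measureReal_superlevel_le_one_sub {f h : ℝ → ℝ}
    (hfmap : ∀ q ∈ Icc (0 : ℝ) 1, f q ∈ Icc (0 : ℝ) 1) (hhmono : MonotoneOn h (Icc (0 : ℝ) 1))
    (hDE : ∀ q ∈ Ioc (0 : ℝ) 1, h (f q) ≤ q) {t : ℝ} (ht : t ∈ Icc (0 : ℝ) 1) (ht1 : h t ≤ 1) :
    (volume.restrict (Ioc (0 : ℝ) 1)).real {q | t ≤ f q} ≤ 1 - h t := by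
  have hsub : {q | t ≤ f q} ∩ Ioc 0 1 ⊆ Icc (h t) 1 := fun q ⟨htq, hq⟩ =>
    ⟨(hhmono ht (hfmap q (Ioc_subset_Icc_self hq)) htq).trans (hDE q hq), hq.2⟩
  calc (volume.restrict (Ioc (0 : ℝ) 1)).real {q | t ≤ f q}
      = volume.real ({q | t ≤ f q} ∩ Ioc 0 1) := measureReal_restrict_apply' measurableSet_Ioc
    _ ≤ volume.real (Icc (h t) 1) := measureReal_mono hsub measure_Icc_lt_top.ne
    _ = 1 - h t := Real.volume_real_Icc_of_le ht1

/-- **Area lemma.** Let `f : [0,1] → [0,1]` be measurable and `h : [0,1] → [0,1]` be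
nondecreasing, and suppose `h(f(q)) ≤ q` for every `q ∈ (0,1]`.  Then the areas under the
two EXIT curves satisfy `∫₀¹ h + ∫₀¹ f ≤ 1`. -/
theorem irsa_dpc_area_lemma (f h : ℝ → ℝ)
    (hf : Measurable f) (hfmap : ∀ q ∈ Set.Icc (0 : ℝ) 1, f q ∈ Set.Icc (0 : ℝ) 1)
    (hhmono : MonotoneOn h (Set.Icc (0 : ℝ) 1))
    (hhmap : ∀ p ∈ Set.Icc (0 : ℝ) 1, h p ∈ Set.Icc (0 : ℝ) 1)
    (hDE : ∀ q ∈ Set.Ioc (0 : ℝ) 1, h (f q) ≤ q) :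
    (∫ p in (0 : ℝ)..1, h p) + (∫ q in (0 : ℝ)..1, f q) ≤ 1 := by
  have hfmap' : ∀ q ∈ Ioc (0 : ℝ) 1, f q ∈ Icc (0 : ℝ) 1 := fun q hq =>
    hfmap q (Ioc_subset_Icc_self hq)
  have hf_int : IntegrableOn f (Ioc 0 1) :=
    Measure.integrableOn_of_bounded (M := 1) (by simp) hf.aestronglyMeasurable <|
      ae_restrict_of_forall_mem measurableSet_Ioc fun q hq =>
        abs_le.2 ⟨by linarith [(hfmap' q hq).1], (hfmap' q hq).2⟩
  have hh_int : IntegrableOn h (Ioc 0 1) :=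
    (MonotoneOn.intervalIntegrable (μ := volume)
      (hhmono.mono (uIcc_of_le (zero_le_one' ℝ)).subset)).1
  have hf_le : ∫ q in Ioc 0 1, f q ≤ ∫ t in Ioc 0 1, (1 - h t) :=
    integral_le_setIntegral_Ioc_of_measureReal_le hf_int
      (ae_restrict_of_forall_mem measurableSet_Ioc fun q hq => (hfmap' q hq).1)
      (ae_restrict_of_forall_mem measurableSet_Ioc fun q hq => (hfmap' q hq).2)
      ((integrable_const 1).sub hh_int)
      fun t ht => measureReal_superlevel_le_one_sub hfmap hhmono hDE (Ioc_subset_Icc_self ht)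
        (hhmap t (Ioc_subset_Icc_self ht)).2
  rw [integral_sub (integrable_const 1) hh_int, setIntegral_const] at hf_le
  rw [intervalIntegral.integral_of_le zero_le_one, intervalIntegral.integral_of_le zero_le_one]
  simp only [Real.volume_real_Ioc_of_le zero_le_one, sub_zero, smul_eq_mul, one_mul] at hf_le
  linarith
end

section
/- For every g > 0 and every δ ∈ (0,1): gδ·exp(−gδ) + (1 + gδ)·g(1−δ)·exp(−g) > g·exp(−g). That is, for every load g, the asymptotic throughput of SA-DPC with any nontrivial power-choice probability δ strictly exceeds the asymptotic throughput g·e^{−g} of vanilla slotted Aloha. -/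
/-! Writing `g = a + b` with `a = gδ` (high power) and `b = g(1 - δ)` (low power), both terms of the
SA-DPC throughput dominate their share of `g e^{-g}`: `e^{-a} > e^{-(a+b)}` and `1 + a > 1`. -/

open Real

lemma add_mul_exp_neg_add_lt (a b : ℝ) (ha : 0 < a) (hb : 0 < b) :
    (a + b) * exp (-(a + b)) < a * exp (-a) + (1 + a) * b * exp (-(a + b)) := by
  have hexp : exp (-(a + b)) < exp (-a) := exp_lt_exp.mpr (by linarith)
  have high : a * exp (-(a + b)) < a * exp (-a) := mul_lt_mul_of_pos_left hexp ha
  have low : b * exp (-(a + b)) < (1 + a) * b * exp (-(a + b)) := by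
    have : b < (1 + a) * b := by nlinarith
    exact mul_lt_mul_of_pos_right this (exp_pos _)
  linarith

/-- For every load `g > 0` and every nontrivial power-choice probability `δ ∈ (0,1)`,
the asymptotic throughput of SA-DPC strictly exceeds that of vanilla slotted Aloha:
`gδ e^{-gδ} + (1+gδ) g(1-δ) e^{-g} > g e^{-g}`. -/
theorem sa_dpc_beats_sa (g δ : ℝ) (hg : 0 < g) (hδ : δ ∈ Set.Ioo (0 : ℝ) 1) :
    g * δ * Real.exp (-(g * δ)) + (1 + g * δ) * (g * (1 - δ)) * Real.exp (-g) >
      g * Real.exp (-g) := by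
  obtain ⟨hδ₀, hδ₁⟩ := hδ
  have hsplit : g = g * δ + g * (1 - δ) := by ring
  have key := add_mul_exp_neg_add_lt (g * δ) (g * (1 - δ)) (mul_pos hg hδ₀)
    (mul_pos hg (sub_pos.mpr hδ₁))
  rw [← hsplit] at key
  exact key
end

section
/- With g = 7/4 and δ = 2/5, the SA-DPC asymptotic throughput satisfies gδ·exp(−gδ) + (1 + gδ)·g(1−δ)·exp(−g) > 0.65; in particular SA-DPC achieves an asymptotic throughput strictly greater than 0.65 (compared with the slotted-Aloha capacity 1/e ≈ 0.368). -/
open Finset in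
theorem Real.sum_taylor_sub_le_exp_neg {x : ℝ} (hx₀ : 0 ≤ x) (hx₁ : x ≤ 1) {n : ℕ} (hn : 0 < n) :
    ∑ m ∈ range n, (-x) ^ m / m.factorial - x ^ n * ((n + 1 : ℝ) / (n.factorial * n)) ≤
      Real.exp (-x) := by
  have habs : |-x| = x := by rw [abs_neg, abs_of_nonneg hx₀]
  have hbound := Real.exp_bound (habs.le.trans hx₁) hn
  rw [habs, Nat.succ_eq_add_one, Nat.cast_add_one] at hbound
  linarith [(abs_le.mp hbound).1]

theorem Real.exp_neg_seven_tenths_ge : (0.4965 : ℝ) ≤ Real.exp (-(7 / 10)) := by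
  refine le_trans ?_ (Real.sum_taylor_sub_le_exp_neg (x := 7 / 10) (by norm_num) (by norm_num)
    (n := 8) (by norm_num))
  norm_num [Finset.sum_range_succ, Nat.factorial]

theorem Real.exp_neg_seven_eighths_ge : (0.4168 : ℝ) ≤ Real.exp (-(7 / 8)) := by
  refine le_trans ?_ (Real.sum_taylor_sub_le_exp_neg (x := 7 / 8) (by norm_num) (by norm_num)
    (n := 8) (by norm_num))
  norm_num [Finset.sum_range_succ, Nat.factorial]

theorem Real.exp_neg_seven_fourths_ge : (0.4168 : ℝ) ^ 2 ≤ Real.exp (-(7 / 4)) := by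
  -- the Taylor remainder bound only applies on `[0, 1]`
  have hsplit : Real.exp (-(7 / 4)) = Real.exp (-(7 / 8)) ^ 2 := by
    rw [sq, ← Real.exp_add]; norm_num
  rw [hsplit]
  exact pow_le_pow_left₀ (by norm_num) Real.exp_neg_seven_eighths_ge 2

/-- With load `g = 7/4` and power-choice probability `δ = 2/5`, the SA-DPC asymptotic
throughput `gδ e^{-gδ} + (1+gδ) g(1-δ) e^{-g}` exceeds `0.65`. -/
theorem sa_dpc_throughput_above_065 :
    (7 / 4 : ℝ) * (2 / 5) * Real.exp (-((7 / 4 : ℝ) * (2 / 5))) +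
        (1 + (7 / 4 : ℝ) * (2 / 5)) * ((7 / 4 : ℝ) * (1 - 2 / 5)) * Real.exp (-(7 / 4 : ℝ)) >
      0.65 := by
  have hgδ : (7 / 4 : ℝ) * (2 / 5) = 7 / 10 := by norm_num
  rw [hgδ]
  linarith [Real.exp_neg_seven_tenths_ge, Real.exp_neg_seven_fourths_ge]
end
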